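/- arXiv:2009.08117 — 6 statements merged into one kernel-verified Lean document; each statement's English description precedes it below -/
import Mathlib

section
/- For any graph G and any integer k with χ(G) ≤ k ≤ achr(G), there exists a proper complete vertex colouring of G using exactly k colours. -/
/-!
Following Harary, Hedetniemi and Prins: two vertices of the same colour under a complete
colouring `f` are non-adjacent, and identifying them gives a smaller graph on which `f` is still
complete and whose chromatic number is at most one more than before. Contracting until `f` is
injective ends at `K_n`, so the chromatic number climbs from `χ(G)` to `n` in unit steps and
equals `k` at some stage. A chromatic colouring is always complete, and a complete colouring of a
contraction pulls back to one of `G`.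
-/

def IsProperComplete {V C : Type*} (G : SimpleGraph V) (f : V → C) : Prop :=
  (∀ v w, G.Adj v w → f v ≠ f w) ∧
  Function.Surjective f ∧
  ∀ c₁ c₂ : C, c₁ ≠ c₂ → ∃ v w, G.Adj v w ∧ f v = c₁ ∧ f w = c₂

noncomputable def achr {V : Type*} (G : SimpleGraph V) : ℕ :=
  sSup {n : ℕ | ∃ f : V → Fin n, IsProperComplete G f}

open Function SimpleGraph

section

variable {V W C : Type*} {G : SimpleGraph V}

/-- If no edge joined the classes of `c₁` and `c₂`, recolouring `c₂` as `c₁` would give a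
non-surjective colouring with `card C ≤ χ(G)` colours. -/
theorem SimpleGraph.Coloring.isProperComplete [Fintype C] (f : G.Coloring C)
    (hf : Fintype.card C ≤ G.chromaticNumber) : IsProperComplete G f := by
  classical
  have hsurj := card_le_chromaticNumber_iff_forall_surjective.mp hf
  refine ⟨fun _ _ => f.valid, hsurj f, fun c₁ c₂ hne => ?_⟩
  by_contra! hno
  let g : G.Coloring C := Coloring.mk (fun x => if f x = c₂ then c₁ else f x) fun {x y} hxy => by
    have := f.valid hxy
    have := hno x y hxy
    have := hno y x hxy.symm
    split_ifs <;> grind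
  obtain ⟨x, hx⟩ := hsurj g c₂
  change (if f x = c₂ then c₁ else f x) = c₂ at hx
  split_ifs at hx <;> grind

theorem IsProperComplete.comp {π : V → W} (hπ : Surjective π)
    (hπG : ∀ x y, G.Adj x y → π x ≠ π y) {g : W → C} (hg : IsProperComplete (G.map π) g) :
    IsProperComplete G (g ∘ π) := by
  refine ⟨fun x y hxy => hg.1 _ _ (map_adj_apply' hxy (hπG x y hxy)), hg.2.1.comp hπ,
    fun c₁ c₂ hne => ?_⟩
  obtain ⟨_, _, ⟨-, x, y, hxy, rfl, rfl⟩, hx, hy⟩ := hg.2.2 c₁ c₂ hne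
  exact ⟨x, y, hxy, hx, hy⟩

theorem IsProperComplete.of_comp {π : V → W} {f : W → C} (hf : IsProperComplete G (f ∘ π)) :
    IsProperComplete (G.map π) f := by
  refine ⟨?_, hf.2.1.of_comp, fun c₁ c₂ hne => ?_⟩
  · rintro _ _ ⟨-, x, y, hxy, rfl, rfl⟩
    exact hf.1 x y hxy
  · obtain ⟨x, y, hxy, hx, hy⟩ := hf.2.2 c₁ c₂ hne
    refine ⟨π x, π y, map_adj_apply' hxy fun h => hne ?_, hx, hy⟩
    rw [← hx, ← hy]
    exact congrArg f h

theorem IsProperComplete.adj_of_injective {f : V → C} (hf : IsProperComplete G f)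
    (hinj : Injective f) {x y : V} (hxy : x ≠ y) : G.Adj x y := by
  obtain ⟨x', y', hadj, hx, hy⟩ := hf.2.2 (f x) (f y) (hinj.ne hxy)
  rwa [← hinj hx, ← hinj hy]

theorem IsProperComplete.not_injective [Fintype V] [Fintype C] {f : V → C}
    (hf : IsProperComplete G f) {m : ℕ} (hm : G.Colorable m) (hmC : m < Fintype.card C) :
    ¬ Injective f := by
  intro hinj
  have hclique : G.IsClique (Finset.univ : Finset V) := fun _ _ _ _ => hf.adj_of_injective hinj
  have hVm : Fintype.card V ≤ m := by simpa using hclique.card_le_of_colorable hm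
  have hCV := Fintype.card_le_of_surjective f hf.2.1
  omega

section Merge

variable [DecidableEq V] {u v : V}

def mergeInto (huv : u ≠ v) (x : V) : {x : V // x ≠ u} :=
  if hx : x = u then ⟨v, huv.symm⟩ else ⟨x, hx⟩

variable (huv : u ≠ v)

theorem val_mergeInto (x : V) : (mergeInto huv x : V) = if x = u then v else x := by
  unfold mergeInto
  split_ifs <;> rfl

theorem mergeInto_surjective : Surjective (mergeInto huv) :=
  fun a => ⟨a, Subtype.ext (by simp [val_mergeInto, a.2])⟩

theorem mergeInto_ne_of_adj (h : ¬ G.Adj u v) {x y : V} (hxy : G.Adj x y) :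
    mergeInto huv x ≠ mergeInto huv y := by
  intro heq
  have := congrArg Subtype.val heq
  simp only [val_mergeInto] at this
  split_ifs at this <;> subst_vars
  · exact G.irrefl hxy
  · exact h hxy
  · exact h hxy.symm
  · exact G.irrefl hxy

theorem comp_mergeInto {f : V → C} (hf : f u = f v) :
    (fun a : {x // x ≠ u} => f a) ∘ mergeInto huv = f := by
  funext x
  simp only [comp_apply, val_mergeInto]
  split_ifs with hx
  · rw [hx, hf]
  · rfl

theorem colorable_map_mergeInto {m : ℕ} (hm : G.Colorable m) :
    (G.map (mergeInto huv)).Colorable (m + 1) := by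
  obtain ⟨D⟩ := hm
  refine ⟨Coloring.mk (fun a => if a.1 = v then Fin.last m else (D a).castSucc) ?_⟩
  rintro _ _ ⟨hne, x, y, hxy, rfl, rfl⟩
  have hval : ∀ z, (mergeInto huv z : V) ≠ v → (mergeInto huv z : V) = z := by
    intro z hz
    simp only [val_mergeInto] at hz ⊢
    split_ifs at hz ⊢ <;> trivial
  change (if _ then _ else _) ≠ (if _ then _ else _)
  split_ifs with hx hy hy
  · exact fun _ => hne (Subtype.ext (hx.trans hy.symm))
  · exact (Fin.castSucc_lt_last _).ne'
  · exact (Fin.castSucc_lt_last _).ne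
  · rw [Ne, Fin.castSucc_inj, hval x hx, hval y hy]
    exact D.valid hxy

end Merge

theorem exists_isProperComplete_of_chromaticNumber_le [Fintype V] {n k : ℕ} {f : V → Fin n}
    (hf : IsProperComplete G f) (hχ : G.chromaticNumber ≤ k) (hkn : k ≤ n) :
    ∃ g : V → Fin k, IsProperComplete G g := by
  classical
  induction hV : Fintype.card V using Nat.strong_induction_on generalizing V with
  | _ N ih =>
  obtain ⟨C⟩ := chromaticNumber_le_iff_colorable.mp hχ
  rcases le_or_gt (k : ℕ∞) G.chromaticNumber with hkχ | hχk
  · exact ⟨C, C.isProperComplete (by simpa using hkχ)⟩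
  obtain _ | m := k
  · simp at hχk
  have hm : G.Colorable m := chromaticNumber_le_iff_colorable.mp
    (ENat.lt_natCast_add_one_iff.mp (by exact_mod_cast hχk))
  obtain ⟨u, v, hfuv, huv⟩ := not_injective_iff.mp (hf.not_injective hm (by simpa using hkn))
  have hnadj : ¬ G.Adj u v := fun h => hf.1 u v h hfuv
  have hcard : Fintype.card {x // x ≠ u} < N := by
    rw [Fintype.card_subtype_compl, Fintype.card_subtype_eq, ← hV]
    exact Nat.sub_one_lt_of_lt (Fintype.card_pos_iff.mpr ⟨u⟩)
  obtain ⟨g, hg⟩ := ih _ hcard (G := G.map (mergeInto huv)) (f := fun a => f a)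
    (IsProperComplete.of_comp (by rwa [comp_mergeInto huv hfuv]))
    (colorable_map_mergeInto huv hm).chromaticNumber_le rfl
  exact ⟨g ∘ mergeInto huv,
    hg.comp (mergeInto_surjective huv) fun _ _ => mergeInto_ne_of_adj huv hnadj⟩

theorem exists_isProperComplete_achr [Fintype V] (G : SimpleGraph V) :
    ∃ f : V → Fin (achr G), IsProperComplete G f := by
  have hne : {n | ∃ f : V → Fin n, IsProperComplete G f}.Nonempty := by
    obtain ⟨C⟩ := G.colorable_chromaticNumber_of_fintype
    exact ⟨_, C, C.isProperComplete (by simpa using ENat.natCast_toNat_le_self _)⟩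
  have hbdd : BddAbove {n | ∃ f : V → Fin n, IsProperComplete G f} := by
    refine ⟨Fintype.card V, ?_⟩
    rintro n ⟨f, hf⟩
    simpa using Fintype.card_le_of_surjective f hf.2.1
  exact Nat.sSup_mem hne hbdd

end

theorem interpolation {V : Type*} [Fintype V] (G : SimpleGraph V) (k : ℕ)
    (h₁ : G.chromaticNumber ≤ k) (h₂ : k ≤ achr G) :
    ∃ f : V → Fin k, IsProperComplete G f :=
  have ⟨_, hf⟩ := exists_isProperComplete_achr G
  exists_isProperComplete_of_chromaticNumber_le hf h₁ h₂
end

section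
/- If M ∈ 𝓜(6,7,C) with |C| = 19, then no colour of C has frequency 1. -/
/-- `M ∈ 𝓜(p,q,C)`: all lines of `M` have pairwise distinct entries and every
pair of distinct colours of `C` is row-based or column-based in `M`. -/
def MemM {p q : ℕ} {C : Type*} (M : Fin p → Fin q → C) : Prop :=
  (∀ i, Function.Injective (M i)) ∧
  (∀ j, Function.Injective fun i => M i j) ∧
  ∀ c₁ c₂ : C, c₁ ≠ c₂ →
    (∃ i j₁ j₂, M i j₁ = c₁ ∧ M i j₂ = c₂) ∨
    (∃ i₁ i₂ j, M i₁ j = c₁ ∧ M i₂ j = c₂)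

/-- The frequency of a colour: its number of occurrences as an entry of `M`. -/
noncomputable def freq {C : Type*} (M : Fin 6 → Fin 7 → C) (γ : C) : ℕ :=
  Nat.card {x : Fin 6 × Fin 7 // M x.1 x.2 = γ}

/-!
If `γ` occurs only at position `(i, j)`, every other colour must meet `γ` in row `i` or in
column `j`, so all colours occur in that cross. The cross has at most `7 + 6 = 13 < 19` entries.
-/

open Finset

section Cross

variable {p q : ℕ} {C : Type*} [DecidableEq C]

def crossColours (M : Fin p → Fin q → C) (i : Fin p) (j : Fin q) : Finset C :=
  univ.image (M i) ∪ univ.image fun i' => M i' j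

theorem card_crossColours_le (M : Fin p → Fin q → C) (i : Fin p) (j : Fin q) :
    #(crossColours M i j) ≤ q + p :=
  calc #(crossColours M i j)
      ≤ #(univ.image (M i)) + #(univ.image fun i' => M i' j) := card_union_le _ _
    _ ≤ #(univ : Finset (Fin q)) + #(univ : Finset (Fin p)) :=
        add_le_add card_image_le card_image_le
    _ = q + p := by simp only [card_univ, Fintype.card_fin]

theorem mem_crossColours_of_unique {M : Fin p → Fin q → C} {γ : C} {i : Fin p} {j : Fin q}
    (hγ : M i j = γ) (huniq : ∀ i' j', M i' j' = γ → i' = i ∧ j' = j)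
    (hmeet : ∀ c, c ≠ γ →
      (∃ i' j₁ j₂, M i' j₁ = c ∧ M i' j₂ = γ) ∨ (∃ i₁ i₂ j', M i₁ j' = c ∧ M i₂ j' = γ))
    (c : C) : c ∈ crossColours M i j := by
  simp only [crossColours, mem_union, mem_image, mem_univ, true_and]
  by_cases hc : c = γ
  · exact Or.inl ⟨j, hγ.trans hc.symm⟩
  rcases hmeet c hc with ⟨i', j₁, j₂, hc', hγ'⟩ | ⟨i₁, i₂, j', hc', hγ'⟩
  · obtain rfl := (huniq i' j₂ hγ').1
    exact Or.inl ⟨j₁, hc'⟩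
  · obtain rfl := (huniq i₂ j' hγ').2
    exact Or.inr ⟨i₁, hc'⟩

theorem card_le_of_unique_occurrence [Fintype C] {M : Fin p → Fin q → C} {γ : C}
    {i : Fin p} {j : Fin q} (hγ : M i j = γ) (huniq : ∀ i' j', M i' j' = γ → i' = i ∧ j' = j)
    (hmeet : ∀ c, c ≠ γ →
      (∃ i' j₁ j₂, M i' j₁ = c ∧ M i' j₂ = γ) ∨ (∃ i₁ i₂ j', M i₁ j' = c ∧ M i₂ j' = γ)) :
    Fintype.card C ≤ q + p :=
  calc Fintype.card C = #(univ : Finset C) := card_univ.symm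
    _ ≤ #(crossColours M i j) :=
        card_le_card fun c _ => mem_crossColours_of_unique hγ huniq hmeet c
    _ ≤ q + p := card_crossColours_le M i j

end Cross

theorem exists_unique_pos_of_freq_eq_one {C : Type*} {M : Fin 6 → Fin 7 → C} {γ : C}
    (h : freq M γ = 1) :
    ∃ i j, M i j = γ ∧ ∀ i' j', M i' j' = γ → i' = i ∧ j' = j := by
  obtain ⟨⟨⟨i, j⟩, hγ⟩, huniq⟩ := Nat.card_eq_one_iff_exists.mp h
  refine ⟨i, j, hγ, fun i' j' hγ' => ?_⟩
  simpa using congrArg Subtype.val (huniq ⟨(i', j'), hγ'⟩)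

theorem no_freq_one {C : Type*} [Fintype C] (M : Fin 6 → Fin 7 → C)
    (hM : MemM M) (hC : Fintype.card C = 19) (γ : C) :
    freq M γ ≠ 1 := by
  classical
  intro h
  obtain ⟨i, j, hγ, huniq⟩ := exists_unique_pos_of_freq_eq_one h
  have := card_le_of_unique_occurrence hγ huniq fun c hc => hM.2.2 c γ hc
  omega
end

section
/- If M ∈ 𝓜(6,7,C) with |C| = 19, then c₃₊ + c₄₊ ≤ 4, where c₃₊ (resp. c₄₊) is the number of colours of frequency at least 3 (resp. at least 4). -/
lemma sum_natCard_fiber {α β : Type*} [Fintype α] [Fintype β] (f : α → β) :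
    ∑ b, Nat.card {a // f a = b} = Fintype.card α := by
  classical
  simp only [Nat.card_eq_fintype_card]
  rw [← Fintype.card_sigma]
  exact Fintype.card_congr (Equiv.sigmaFiberEquiv f)

lemma natCard_three_le_add_natCard_four_le {ι : Type*} [Fintype ι] (f : ι → ℕ)
    (h : ∀ i, 2 ≤ f i) :
    Nat.card {i // 3 ≤ f i} + Nat.card {i // 4 ≤ f i} + 2 * Fintype.card ι ≤ ∑ i, f i := by
  classical
  rw [Nat.card_eq_fintype_card, Nat.card_eq_fintype_card, Fintype.card_subtype,
    Fintype.card_subtype, Finset.card_filter, Finset.card_filter, ← Finset.card_univ,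
    Finset.card_eq_sum_ones, Finset.mul_sum, ← Finset.sum_add_distrib, ← Finset.sum_add_distrib]
  refine Finset.sum_le_sum fun i _ => ?_
  have := h i
  split_ifs <;> omega

namespace MemM

variable {p q : ℕ} {C : Type*} {M : Fin p → Fin q → C}

lemma exists_eq [Nontrivial C] (hM : MemM M) (c : C) : ∃ i j, M i j = c := by
  obtain ⟨c', hc'⟩ := exists_ne c
  rcases hM.2.2 c c' hc'.symm with ⟨i, j, -, hc, -⟩ | ⟨i, -, j, hc, -⟩
  · exact ⟨i, j, hc⟩
  · exact ⟨i, j, hc⟩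

lemma card_le_of_unique_occurrence [Fintype C] (hM : MemM M) {i₀ : Fin p} {j₀ : Fin q}
    (hunique : ∀ i j, M i j = M i₀ j₀ → i = i₀ ∧ j = j₀) :
    Fintype.card C ≤ q + p := by
  have hsurj : Function.Surjective (Sum.elim (M i₀) fun i => M i j₀) := by
    intro d
    by_cases hd : d = M i₀ j₀
    · exact ⟨Sum.inl j₀, hd.symm⟩
    rcases hM.2.2 d _ hd with ⟨i, j, j', hj, hj'⟩ | ⟨i, i', j, hi, hi'⟩
    · obtain ⟨rfl, -⟩ := hunique i j' hj'
      exact ⟨Sum.inl j, hj⟩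
    · obtain ⟨-, rfl⟩ := hunique i' j hi'
      exact ⟨Sum.inr i, hi⟩
  simpa using Fintype.card_le_of_surjective _ hsurj

lemma two_le_natCard_fiber [Fintype C] [Nontrivial C] (hM : MemM M)
    (hC : p + q < Fintype.card C) (c : C) :
    2 ≤ Nat.card {x : Fin p × Fin q // M x.1 x.2 = c} := by
  obtain ⟨i₀, j₀, rfl⟩ := hM.exists_eq c
  by_contra! hlt
  have : Subsingleton {x : Fin p × Fin q // M x.1 x.2 = M i₀ j₀} :=
    Finite.card_le_one_iff_subsingleton.mp (by omega)
  have hunique : ∀ i j, M i j = M i₀ j₀ → i = i₀ ∧ j = j₀ := fun i j h =>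
    Prod.ext_iff.mp (congrArg Subtype.val (Subsingleton.elim (α := {x // M x.1 x.2 = M i₀ j₀})
      ⟨(i, j), h⟩ ⟨(i₀, j₀), rfl⟩))
  have := hM.card_le_of_unique_occurrence hunique
  omega

end MemM

theorem c3plus_add_c4plus_le {C : Type*} [Fintype C] (M : Fin 6 → Fin 7 → C)
    (hM : MemM M) (hC : Fintype.card C = 19) :
    Nat.card {c : C // 3 ≤ freq M c} + Nat.card {c : C // 4 ≤ freq M c} ≤ 4 := by
  have hsum : ∑ c, freq M c = 42 := sum_natCard_fiber fun x : Fin 6 × Fin 7 => M x.1 x.2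
  have : Nontrivial C := Fintype.one_lt_card_iff_nontrivial.mp (by omega)
  have hbound := natCard_three_le_add_natCard_four_le (freq M)
    (hM.two_le_natCard_fiber (by omega))
  omega
end

section
/- If M ∈ 𝓜(6,7,C) with |C| = 19, then for any two distinct rows i₁, i₂ ∈ [1,6], the number of colours of frequency 2 that appear in both row i₁ and row i₂ is at most 3. -/
/-!
Suppose four colours of frequency 2 lie in both rows `i₁` and `i₂`. The two rows then carry
at most `14 - 4` colours. Fix one of these colours `c₀`, at `(i₁, a)` and `(i₂, b)`. A colour
missing from both rows is not row-paired with `c₀`, so it is column-paired with it and lies in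
column `a` or `b` of one of the other four rows: at most `8` such colours. That leaves at most
`10 + 8 = 18 < 19` colours.
-/

open Finset Function

theorem Nat.eq_or_eq_of_card_subtype_eq_two {α : Type*} {P : α → Prop}
    (hP : Nat.card {x // P x} = 2) {x y z : α} (hx : P x) (hy : P y) (hxy : x ≠ y)
    (hz : P z) : z = x ∨ z = y := by
  obtain ⟨w, -, hw⟩ := (Nat.card_eq_two_iff' (⟨x, hx⟩ : {x // P x})).mp hP
  by_contra! hne
  have hyw := hw ⟨y, hy⟩ fun h => hxy (congrArg Subtype.val h).symm
  have hzw := hw ⟨z, hz⟩ fun h => hne.1 (congrArg Subtype.val h)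
  exact hne.2 (congrArg Subtype.val (hzw.trans hyw.symm))

section RowColours

variable {p q : ℕ} {C : Type*} [DecidableEq C] (M : Fin p → Fin q → C)

def rowColours (i : Fin p) : Finset C := univ.image (M i)

variable {M}

@[simp]
theorem mem_rowColours {i : Fin p} {c : C} : c ∈ rowColours M i ↔ ∃ j, M i j = c := by
  simp [rowColours]

theorem card_rowColours {i : Fin p} (hi : Injective (M i)) : #(rowColours M i) = q := by
  rw [rowColours, card_image_of_injective _ hi, card_univ, Fintype.card_fin]

theorem card_rowColours_union_add_card_inter (hrow : ∀ i, Injective (M i)) (i₁ i₂ : Fin p) :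
    #(rowColours M i₁ ∪ rowColours M i₂) + #(rowColours M i₁ ∩ rowColours M i₂) = 2 * q := by
  rw [card_union_add_card_inter, card_rowColours (hrow i₁), card_rowColours (hrow i₂)]
  ring

variable {i₁ i₂ : Fin p} {a b : Fin q} {c₀ : C}

theorem exists_mem_columns_of_notMem_rowColours (hM : MemM M) (hc₀ : M i₁ a = c₀)
    (hiso : ∀ r j, M r j = c₀ → (r, j) = (i₁, a) ∨ (r, j) = (i₂, b)) {d : C}
    (hd : d ∉ rowColours M i₁ ∪ rowColours M i₂) :
    ∃ r ∉ ({i₁, i₂} : Finset (Fin p)), ∃ j ∈ ({a, b} : Finset (Fin q)), M r j = d := by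
  simp only [mem_union, mem_rowColours, not_or, not_exists] at hd
  have hdc₀ : c₀ ≠ d := fun h => hd.1 a (hc₀.trans h)
  rcases hM.2.2 c₀ d hdc₀ with ⟨r, j₁, j₂, hr, hrd⟩ | ⟨r₁, r₂, j, hr₁, hr₂⟩
  · rcases hiso r j₁ hr with h | h <;> cases h
    · exact absurd hrd (hd.1 j₂)
    · exact absurd hrd (hd.2 j₂)
  · refine ⟨r₂, ?_, j, ?_, hr₂⟩
    · simp only [mem_insert, mem_singleton, not_or]
      constructor <;> rintro rfl
      exacts [hd.1 j hr₂, hd.2 j hr₂]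
    · rcases hiso r₁ j hr₁ with h | h <;> cases h <;> simp

theorem card_compl_rowColours_union_le [Fintype C] (hM : MemM M) (hi : i₁ ≠ i₂)
    (hc₀ : M i₁ a = c₀) (hiso : ∀ r j, M r j = c₀ → (r, j) = (i₁, a) ∨ (r, j) = (i₂, b)) :
    #(rowColours M i₁ ∪ rowColours M i₂)ᶜ ≤ 2 * (p - 2) := by
  have hsub : (rowColours M i₁ ∪ rowColours M i₂)ᶜ ⊆
      (({i₁, i₂} : Finset (Fin p))ᶜ ×ˢ ({a, b} : Finset (Fin q))).image fun x => M x.1 x.2 := by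
    intro d hd
    obtain ⟨r, hr, j, hj, hrj⟩ :=
      exists_mem_columns_of_notMem_rowColours hM hc₀ hiso (mem_compl.mp hd)
    exact mem_image.mpr ⟨(r, j), mem_product.mpr ⟨mem_compl.mpr hr, hj⟩, hrj⟩
  calc #(rowColours M i₁ ∪ rowColours M i₂)ᶜ
      ≤ #(({i₁, i₂} : Finset (Fin p))ᶜ ×ˢ ({a, b} : Finset (Fin q))) :=
        (card_le_card hsub).trans card_image_le
    _ ≤ (p - 2) * 2 := by
        rw [card_product, card_compl, card_pair hi, Fintype.card_fin]
        exact Nat.mul_le_mul_left _ card_le_two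
    _ = 2 * (p - 2) := Nat.mul_comm _ _

theorem card_rowColours_inter_add_card_le [Fintype C] (hM : MemM M) (hi : i₁ ≠ i₂)
    (hc₀ : M i₁ a = c₀) (hiso : ∀ r j, M r j = c₀ → (r, j) = (i₁, a) ∨ (r, j) = (i₂, b)) :
    #(rowColours M i₁ ∩ rowColours M i₂) + Fintype.card C ≤ 2 * q + 2 * (p - 2) := by
  have hsplit := card_add_card_compl (rowColours M i₁ ∪ rowColours M i₂)
  have hrows := card_rowColours_union_add_card_inter hM.1 i₁ i₂
  have houtside := card_compl_rowColours_union_le hM hi hc₀ hiso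
  omega

end RowColours

theorem eq_or_eq_of_freq_eq_two {C : Type*} {M : Fin 6 → Fin 7 → C} {c : C}
    (hc : freq M c = 2) {i₁ i₂ : Fin 6} {a b : Fin 7} (hi : i₁ ≠ i₂) (ha : M i₁ a = c)
    (hb : M i₂ b = c) (r : Fin 6) (j : Fin 7) (hrj : M r j = c) :
    (r, j) = (i₁, a) ∨ (r, j) = (i₂, b) :=
  Nat.eq_or_eq_of_card_subtype_eq_two (P := fun x : Fin 6 × Fin 7 => M x.1 x.2 = c) hc ha hb
    (fun h => hi (congrArg Prod.fst h)) hrj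

theorem shared_rows_le_three {C : Type*} [Fintype C] (M : Fin 6 → Fin 7 → C)
    (hM : MemM M) (hC : Fintype.card C = 19) (i₁ i₂ : Fin 6) (h : i₁ ≠ i₂) :
    Nat.card {c : C // freq M c = 2 ∧ (∃ j, M i₁ j = c) ∧ (∃ j, M i₂ j = c)} ≤ 3 := by
  classical
  set S := {c : C // freq M c = 2 ∧ (∃ j, M i₁ j = c) ∧ (∃ j, M i₂ j = c)}
  cases isEmpty_or_nonempty S with
  | inl hS => simp
  | inr hS =>
    obtain ⟨c₀, hfreq, ⟨a, ha⟩, ⟨b, hb⟩⟩ := hS.some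
    have hshared : Nat.card S ≤ #(rowColours M i₁ ∩ rowColours M i₂) := by
      rw [Nat.card_eq_fintype_card, Fintype.card_subtype]
      exact card_le_card fun c hc => by simp_all
    have := card_rowColours_inter_add_card_le hM h ha (eq_or_eq_of_freq_eq_two hfreq h ha hb)
    omega
end

section
/- If M ∈ 𝓜(6,7,C) with |C| = 19, then for any two distinct columns j, l ∈ [1,7], the number of colours of frequency 2 appearing in both column j and column l is at most 2. -/
/-!
Suppose three colours of frequency two each occur in row `top k` of column `j` and in row
`bot k` of column `l`. A colour absent from both columns shares a line, hence a row, with each of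
them, so it occurs in every block `{top k, bot k} × {j, l}ᶜ`. At least `19 - 9 = 10` colours
are absent from both columns and each block has only `10` cells, so every block is filled exactly
by the absent colours. All colours occur at least twice, so the total excess `∑ (freq - 2)` is
`42 - 38 = 4`. Hence at least six absent colours have frequency two; each meets the three pairs
of rows in two cells, so lies in a row common to two pairs, and there must be two such rows: the
pairs span at most four rows. For a row `w` outside them, the colours `M w j` and `M w l` have no
entry in the spanned rows yet meet all ten absent colours, which costs more excess than the
four available.
-/

open Finset Function

section General

variable {C : Type*} [DecidableEq C] {p q : ℕ}

def cells (M : Fin p → Fin q → C) (c : C) : Finset (Fin p × Fin q) :=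
  {x | M x.1 x.2 = c}

def colColours (M : Fin p → Fin q → C) (j : Fin q) : Finset C :=
  univ.image fun i => M i j

def coloursIn (M : Fin p → Fin q → C) (s : Finset (Fin p)) (t : Finset (Fin q)) : Finset C :=
  (s ×ˢ t).image fun x => M x.1 x.2

def offColumns [Fintype C] (M : Fin p → Fin q → C) (j l : Fin q) : Finset C :=
  (colColours M j ∪ colColours M l)ᶜ

def escaping (M : Fin p → Fin q → C) (R : Finset (Fin p)) (O : Finset C) : Finset C :=
  {o ∈ O | ∃ x ∈ cells M o, x.1 ∉ R}

variable {M : Fin p → Fin q → C}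

@[simp]
theorem mem_cells {c : C} {x : Fin p × Fin q} : x ∈ cells M c ↔ M x.1 x.2 = c := by
  simp [cells]

@[simp]
theorem mem_colColours {c : C} {j : Fin q} : c ∈ colColours M j ↔ ∃ i, M i j = c := by
  simp [colColours]

theorem mem_coloursIn {c : C} {s : Finset (Fin p)} {t : Finset (Fin q)} :
    c ∈ coloursIn M s t ↔ ∃ x ∈ s ×ˢ t, M x.1 x.2 = c :=
  mem_image

@[simp]
theorem mem_offColumns [Fintype C] {o : C} {j l : Fin q} :
    o ∈ offColumns M j l ↔ o ∉ colColours M j ∧ o ∉ colColours M l := by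
  simp [offColumns, -mem_colColours]

theorem offColumns_comm [Fintype C] (j l : Fin q) : offColumns M j l = offColumns M l j := by
  rw [offColumns, offColumns, union_comm]

theorem card_coloursIn_le (s : Finset (Fin p)) (t : Finset (Fin q)) :
    #(coloursIn M s t) ≤ #s * #t :=
  card_image_le.trans (card_product s t).le

theorem card_compl_pair {j l : Fin q} (hjl : j ≠ l) : #({j, l}ᶜ : Finset (Fin q)) = q - 2 := by
  rw [card_compl, card_pair hjl, Fintype.card_fin]

theorem sum_card_cells [Fintype C] (M : Fin p → Fin q → C) : ∑ c, #(cells M c) = p * q :=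
  calc ∑ c, #(cells M c) = #(univ : Finset (Fin p × Fin q)) :=
        (card_eq_sum_card_fiberwise fun _ _ => mem_univ _).symm
    _ = p * q := by simp

theorem card_le_sum_excess {T : Finset C} (hT : ∀ c ∈ T, 3 ≤ #(cells M c)) :
    #T ≤ ∑ c ∈ T, (#(cells M c) - 2) := by
  simpa using card_nsmul_le_sum T (fun c => #(cells M c) - 2) 1 fun c hc => by
    have := hT c hc
    omega

theorem cells_eq_pair {c : C} {a b : Fin p} {j l : Fin q} (hjl : j ≠ l)
    (hc : #(cells M c) = 2) (ha : M a j = c) (hb : M b l = c) :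
    cells M c = {(a, j), (b, l)} := by
  refine (eq_of_subset_of_card_le ?_ ?_).symm
  · simp [insert_subset_iff, ha, hb]
  · rw [hc, card_pair fun h => hjl (congrArg Prod.snd h)]

namespace MemM

theorem cells_nonempty [Fintype C] (hM : MemM M) (hC : 1 < Fintype.card C) (c : C) :
    (cells M c).Nonempty := by
  obtain ⟨c', hc'⟩ := Fintype.exists_ne_of_one_lt_card hC c
  rcases hM.2.2 c' c hc' with ⟨i, -, y, -, hy⟩ | ⟨-, i, y, -, hy⟩ <;> exact ⟨(i, y), mem_cells.2 hy⟩

theorem card_cells_ne_one [Fintype C] (hM : MemM M) (hC : p + q ≤ Fintype.card C) (c : C) :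
    #(cells M c) ≠ 1 := by
  intro h
  obtain ⟨⟨r, s⟩, hrs⟩ := card_eq_one.1 h
  have hrsc : M r s = c := mem_cells.1 (hrs ▸ mem_singleton_self _)
  have hcell : ∀ {i y}, M i y = c → i = r ∧ y = s := fun hiy => by
    simpa [hrs] using (mem_cells.2 hiy : (_, _) ∈ cells M c)
  have hcover : (univ : Finset C) ⊆ univ.image (M r) ∪ (univ.erase r).image fun i => M i s := by
    intro c' _
    by_cases hc' : c' = c
    · exact mem_union_left _ (mem_image.2 ⟨s, mem_univ _, hrsc.trans hc'.symm⟩)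
    rcases hM.2.2 c c' (Ne.symm hc') with ⟨i, y₁, y₂, h₁, h₂⟩ | ⟨i₁, i₂, y, h₁, h₂⟩
    · obtain ⟨rfl, -⟩ := hcell h₁
      exact mem_union_left _ (mem_image.2 ⟨y₂, mem_univ _, h₂⟩)
    · obtain ⟨rfl, rfl⟩ := hcell h₁
      refine mem_union_right _ (mem_image.2 ⟨i₂, mem_erase.2 ⟨?_, mem_univ _⟩, h₂⟩)
      rintro rfl
      exact hc' (h₂.symm.trans h₁)
  have hcard := (card_le_card hcover).trans
    ((card_union_le _ _).trans (add_le_add card_image_le card_image_le))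
  rw [card_univ, card_univ, card_erase_of_mem (mem_univ r), card_univ, Fintype.card_fin,
    Fintype.card_fin] at hcard
  have := r.pos
  omega

theorem two_le_card_cells [Fintype C] (hM : MemM M) (h₁ : 1 < Fintype.card C)
    (h₂ : p + q ≤ Fintype.card C) (c : C) : 2 ≤ #(cells M c) := by
  have := card_pos.2 (hM.cells_nonempty h₁ c)
  have := hM.card_cells_ne_one h₂ c
  omega

theorem sum_excess_le [Fintype C] (hM : MemM M) (h₁ : 1 < Fintype.card C)
    (h₂ : p + q ≤ Fintype.card C) (T : Finset C) :
    ∑ c ∈ T, (#(cells M c) - 2) ≤ p * q - 2 * Fintype.card C :=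
  calc ∑ c ∈ T, (#(cells M c) - 2) ≤ ∑ c, (#(cells M c) - 2) :=
        sum_le_sum_of_subset (subset_univ T)
    _ = p * q - 2 * Fintype.card C := by
      rw [sum_tsub_distrib _ fun c _ => hM.two_le_card_cells h₁ h₂ c, sum_card_cells]
      simp [mul_comm]

theorem card_offColumns_add [Fintype C] (hM : MemM M) (j l : Fin q) :
    #(offColumns M j l) + 2 * p = Fintype.card C + #(colColours M j ∩ colColours M l) := by
  have hcol : ∀ j, #(colColours M j) = p := fun j => by
    rw [colColours, card_image_of_injective _ (hM.2.1 j), card_univ, Fintype.card_fin]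
  have hunion := card_union_add_card_inter (colColours M j) (colColours M l)
  rw [hcol, hcol] at hunion
  have := card_le_univ (colColours M j ∪ colColours M l)
  rw [offColumns, card_compl]
  omega

/-- Every colour of `O` meets `M w j`, either in a row outside `R` or in the column of another
occurrence of `M w j`. -/
theorem card_le_card_escaping_add (hM : MemM M) {R : Finset (Fin p)} {O : Finset C} {w : Fin p}
    {j : Fin q} (hO : ∀ o ∈ O, o ∉ colColours M j) (hR : ∀ r ∈ R, ∀ x, M r x ≠ M w j) :
    #O ≤ #(escaping M R O) + (#(cells M (M w j)) - 1) * #R := by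
  have hsub : O ⊆ escaping M R O ∪
      ((cells M (M w j)).erase (w, j)).biUnion fun x => coloursIn M R {x.2} := by
    intro o ho
    have hne : M w j ≠ o := fun h => hO o ho (mem_colColours.2 ⟨w, h⟩)
    rcases hM.2.2 _ _ hne with ⟨r, x, y, hx, hy⟩ | ⟨r₁, r₂, y, h₁, h₂⟩
    · exact mem_union_left _ (mem_filter.2 ⟨ho, (r, y), mem_cells.2 hy, fun hr => hR r hr x hx⟩)
    · by_cases hr₂ : r₂ ∈ R
      · refine mem_union_right _ (mem_biUnion.2 ⟨(r₁, y), mem_erase.2 ⟨?_, mem_cells.2 h₁⟩, ?_⟩)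
        · rintro ⟨-, rfl⟩
          exact hO o ho (mem_colColours.2 ⟨r₂, h₂⟩)
        · exact mem_coloursIn.2 ⟨(r₂, y), mem_product.2 ⟨hr₂, mem_singleton_self y⟩, h₂⟩
      · exact mem_union_left _ (mem_filter.2 ⟨ho, (r₂, y), mem_cells.2 h₂, hr₂⟩)
  calc #O ≤ _ := card_le_card hsub
    _ ≤ #(escaping M R O) + ∑ x ∈ (cells M (M w j)).erase (w, j), #(coloursIn M R {x.2}) :=
      (card_union_le _ _).trans (by gcongr; exact card_biUnion_le)
    _ ≤ #(escaping M R O) + ∑ x ∈ (cells M (M w j)).erase (w, j), #R := by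
      gcongr with x
      simpa using card_coloursIn_le (M := M) R {x.2}
    _ = _ := by
      rw [sum_const, card_erase_of_mem (mem_cells.2 rfl : (w, j) ∈ cells M (M w j)), smul_eq_mul]

end MemM

end General

structure ThreeSharedColours {C : Type*} [DecidableEq C] {p q : ℕ} (M : Fin p → Fin q → C)
    (j l : Fin q) where
  top : Fin 3 → Fin p
  bot : Fin 3 → Fin p
  colour : Fin 3 → C
  injective_colour : Injective colour
  cells_colour : ∀ k, cells M (colour k) = {(top k, j), (bot k, l)}

namespace ThreeSharedColours

section General

variable {C : Type*} [DecidableEq C] {p q : ℕ} {M : Fin p → Fin q → C} {j l : Fin q}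
  (S : ThreeSharedColours M j l)

def swap : ThreeSharedColours M l j where
  top := S.bot
  bot := S.top
  colour := S.colour
  injective_colour := S.injective_colour
  cells_colour k := by rw [S.cells_colour, pair_comm]

def pair (k : Fin 3) : Finset (Fin p) := {S.top k, S.bot k}

def rows : Finset (Fin p) := univ.image S.top ∪ univ.image S.bot

theorem rows_swap : S.swap.rows = S.rows := union_comm _ _

theorem mem_rows {r : Fin p} : r ∈ S.rows ↔ ∃ k, r ∈ S.pair k := by
  simp [rows, pair, exists_or, eq_comm]

theorem mem_cells_colour {k : Fin 3} {x : Fin p × Fin q} :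
    x ∈ cells M (S.colour k) ↔ x = (S.top k, j) ∨ x = (S.bot k, l) := by
  rw [S.cells_colour, mem_insert, mem_singleton]

theorem top_col (k : Fin 3) : M (S.top k) j = S.colour k :=
  mem_cells.1 (S.mem_cells_colour.2 (Or.inl rfl))

theorem bot_col (k : Fin 3) : M (S.bot k) l = S.colour k :=
  mem_cells.1 (S.mem_cells_colour.2 (Or.inr rfl))

theorem injective_top : Injective S.top := fun a b h =>
  S.injective_colour (by rw [← S.top_col, h, S.top_col])

theorem injective_bot : Injective S.bot := fun a b h =>
  S.injective_colour (by rw [← S.bot_col, h, S.bot_col])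

theorem card_rows_add_card_inter :
    #S.rows + #(univ.image S.top ∩ univ.image S.bot) = 6 := by
  rw [rows, card_union_add_card_inter, card_image_of_injective _ S.injective_top,
    card_image_of_injective _ S.injective_bot, card_univ, Fintype.card_fin]

theorem mem_inter_of_mem_pair {a b : Fin 3} (hab : a ≠ b) {r : Fin p} (ha : r ∈ S.pair a)
    (hb : r ∈ S.pair b) : r ∈ univ.image S.top ∩ univ.image S.bot := by
  simp only [pair, mem_insert, mem_singleton] at ha hb
  rcases ha with rfl | rfl <;> rcases hb with h | h
  · exact absurd (S.injective_top h) hab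
  · exact mem_inter.2 ⟨mem_image_of_mem _ (mem_univ a), h ▸ mem_image_of_mem _ (mem_univ b)⟩
  · exact mem_inter.2 ⟨h ▸ mem_image_of_mem _ (mem_univ b), mem_image_of_mem _ (mem_univ a)⟩
  · exact absurd (S.injective_bot h) hab

theorem not_forall_mem_pair (r : Fin p) : ¬ ∀ k, r ∈ S.pair k := by
  intro h
  obtain ⟨a, b, hab, he⟩ :=
    Fintype.exists_ne_map_eq_of_card_lt (fun k => decide (S.top k = r)) (by simp)
  have ha := h a
  have hb := h b
  simp only [pair, mem_insert, mem_singleton] at ha hb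
  by_cases hta : S.top a = r
  · have htb : S.top b = r := by simpa [hta] using he.symm
    exact hab (S.injective_top (hta.trans htb.symm))
  · have htb : S.top b ≠ r := by simpa [hta] using he.symm
    exact hab (S.injective_bot ((ha.resolve_left (Ne.symm hta)).symm.trans
      (hb.resolve_left (Ne.symm htb))))

theorem image_colour_subset : univ.image S.colour ⊆ colColours M j ∩ colColours M l := by
  intro c hc
  obtain ⟨k, -, rfl⟩ := mem_image.1 hc
  exact mem_inter.2 ⟨mem_colColours.2 ⟨_, S.top_col k⟩, mem_colColours.2 ⟨_, S.bot_col k⟩⟩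

theorem card_coloursIn_pair_le (hjl : j ≠ l) (k : Fin 3) :
    #(coloursIn M (S.pair k) {j, l}ᶜ) ≤ 2 * (q - 2) :=
  calc #(coloursIn M (S.pair k) {j, l}ᶜ) ≤ #(S.pair k) * #({j, l}ᶜ : Finset (Fin q)) :=
        card_coloursIn_le _ _
    _ ≤ 2 * (q - 2) := by rw [card_compl_pair hjl]; gcongr; exact card_le_two

variable [Fintype C]

theorem offColumns_subset (hM : MemM M) (k : Fin 3) :
    offColumns M j l ⊆ coloursIn M (S.pair k) {j, l}ᶜ := by
  intro o ho
  obtain ⟨hoj, hol⟩ := mem_offColumns.1 ho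
  have hne : o ≠ S.colour k := fun h => hoj (mem_colColours.2 ⟨_, (S.top_col k).trans h.symm⟩)
  rcases hM.2.2 o (S.colour k) hne with ⟨r, x, y, hx, hy⟩ | ⟨r₁, r₂, y, h₁, h₂⟩
  · refine mem_coloursIn.2 ⟨(r, x), mem_product.2 ⟨?_, ?_⟩, hx⟩
    · rcases S.mem_cells_colour.1 (mem_cells.2 hy : (r, y) ∈ _) with h | h <;>
        simp [pair, (Prod.mk.inj h).1]
    · simp only [mem_compl, mem_insert, mem_singleton, not_or]
      exact ⟨fun h => hoj (mem_colColours.2 ⟨r, h ▸ hx⟩),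
        fun h => hol (mem_colColours.2 ⟨r, h ▸ hx⟩)⟩
  · rcases S.mem_cells_colour.1 (mem_cells.2 h₂ : (r₂, y) ∈ _) with h | h <;>
      cases (Prod.mk.inj h).2
    · exact absurd (mem_colColours.2 ⟨r₁, h₁⟩) hoj
    · exact absurd (mem_colColours.2 ⟨r₁, h₁⟩) hol

/-- The two cells of `o` meet all three pairs of rows, so one of them meets two pairs. -/
theorem mem_coloursIn_inter (hM : MemM M) {o : C} (ho : o ∈ offColumns M j l)
    (h₂ : #(cells M o) = 2) :
    o ∈ coloursIn M (univ.image S.top ∩ univ.image S.bot) {j, l}ᶜ := by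
  choose y hy hyo using fun k => mem_coloursIn.1 (S.offColumns_subset hM k ho)
  obtain ⟨a, -, b, -, hab, he⟩ := exists_ne_map_eq_of_card_lt_of_maps_to (s := univ)
    (t := cells M o) (by simp [h₂]) fun k _ => mem_cells.2 (hyo k)
  have ha := mem_product.1 (hy a)
  have hb := mem_product.1 (hy b)
  exact mem_coloursIn.2
    ⟨y a, mem_product.2 ⟨S.mem_inter_of_mem_pair hab ha.1 (he ▸ hb.1), ha.2⟩, hyo a⟩

theorem three_le_card_cells_of_mem_escaping (hM : MemM M) {o : C}
    (ho : o ∈ escaping M S.rows (offColumns M j l)) : 3 ≤ #(cells M o) := by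
  obtain ⟨hoO, x₀, hx₀, hx₀R⟩ := mem_filter.1 ho
  choose y hy hyo using fun k => mem_coloursIn.1 (S.offColumns_subset hM k hoO)
  have hyk : ∀ k, (y k).1 ∈ S.pair k := fun k => (mem_product.1 (hy k)).1
  have hy₀ : ∀ k, y k ∈ (cells M o).erase x₀ := fun k =>
    mem_erase.2 ⟨fun h => hx₀R (h ▸ S.mem_rows.2 ⟨k, hyk k⟩), mem_cells.2 (hyo k)⟩
  by_contra! hlt
  have hle : #((cells M o).erase x₀) ≤ 1 := by rw [card_erase_of_mem hx₀]; omega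
  exact S.not_forall_mem_pair (y 0).1 fun k => card_le_one.1 hle _ (hy₀ k) _ (hy₀ 0) ▸ hyk k

end General

end ThreeSharedColours

section SixBySeven

variable {C : Type*} [DecidableEq C]

theorem freq_eq_card_cells (M : Fin 6 → Fin 7 → C) (c : C) : freq M c = #(cells M c) := by
  rw [freq, Nat.card_eq_fintype_card, Fintype.card_subtype]
  rfl

variable [Fintype C] {M : Fin 6 → Fin 7 → C}

theorem MemM.sum_excess_le_four (hM : MemM M) (hC : Fintype.card C = 19) (T : Finset C) :
    ∑ c ∈ T, (#(cells M c) - 2) ≤ 4 := by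
  simpa [hC] using hM.sum_excess_le (by omega) (by omega) T

namespace ThreeSharedColours

variable {j l : Fin 7}

theorem card_offColumns_le_ten (S : ThreeSharedColours M j l) (hM : MemM M) (hjl : j ≠ l) :
    #(offColumns M j l) ≤ 10 :=
  (card_le_card (S.offColumns_subset hM 0)).trans (S.card_coloursIn_pair_le hjl 0)

theorem ten_le_card_offColumns (S : ThreeSharedColours M j l) (hM : MemM M)
    (hC : Fintype.card C = 19) : 10 ≤ #(offColumns M j l) := by
  have := hM.card_offColumns_add j l
  have := card_le_card S.image_colour_subset
  rw [card_image_of_injective _ S.injective_colour, card_univ, Fintype.card_fin] at this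
  omega

theorem coloursIn_pair_eq_offColumns (S : ThreeSharedColours M j l) (hM : MemM M)
    (hC : Fintype.card C = 19) (hjl : j ≠ l) (k : Fin 3) :
    coloursIn M (S.pair k) {j, l}ᶜ = offColumns M j l :=
  (eq_of_subset_of_card_le (S.offColumns_subset hM k)
    ((S.card_coloursIn_pair_le hjl k).trans (S.ten_le_card_offColumns hM hC))).symm

theorem mem_offColumns_of_mem_rows (S : ThreeSharedColours M j l) (hM : MemM M)
    (hC : Fintype.card C = 19) (hjl : j ≠ l) {r : Fin 6} (hr : r ∈ S.rows) {x : Fin 7}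
    (hx : x ∉ ({j, l} : Finset (Fin 7))) :
    M r x ∈ offColumns M j l := by
  obtain ⟨k, hk⟩ := S.mem_rows.1 hr
  rw [← S.coloursIn_pair_eq_offColumns hM hC hjl k]
  exact mem_coloursIn.2 ⟨(r, x), mem_product.2 ⟨hk, mem_compl.2 hx⟩, rfl⟩

theorem inter_colColours_eq (S : ThreeSharedColours M j l) (hM : MemM M)
    (hC : Fintype.card C = 19) (hjl : j ≠ l) :
    colColours M j ∩ colColours M l = univ.image S.colour := by
  refine (eq_of_subset_of_card_le S.image_colour_subset ?_).symm
  have := hM.card_offColumns_add j l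
  have := S.card_offColumns_le_ten hM hjl
  rw [card_image_of_injective _ S.injective_colour, card_univ, Fintype.card_fin]
  omega

theorem notMem_colColours_of_notMem_rows (S : ThreeSharedColours M j l) (hM : MemM M)
    (hC : Fintype.card C = 19) (hjl : j ≠ l) {w : Fin 6} (hw : w ∉ S.rows) :
    M w j ∉ colColours M l := by
  intro h
  have hmem : M w j ∈ colColours M j ∩ colColours M l :=
    mem_inter.2 ⟨mem_colColours.2 ⟨w, rfl⟩, h⟩
  rw [S.inter_colColours_eq hM hC hjl] at hmem
  obtain ⟨k, -, hk⟩ := mem_image.1 hmem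
  rcases S.mem_cells_colour.1 (mem_cells.2 hk.symm : (w, j) ∈ _) with h | h
  · exact hw (S.mem_rows.2 ⟨k, by simp [pair, (Prod.mk.inj h).1]⟩)
  · exact hjl (congrArg Prod.snd h)

theorem card_rows_le_four (S : ThreeSharedColours M j l) (hM : MemM M)
    (hC : Fintype.card C = 19) (hjl : j ≠ l) : #S.rows ≤ 4 := by
  set O := offColumns M j l
  set D := univ.image S.top ∩ univ.image S.bot
  have hO₂ : #{o ∈ O | #(cells M o) = 2} ≤ #D * (7 - 2) :=
    calc #{o ∈ O | #(cells M o) = 2} ≤ #(coloursIn M D {j, l}ᶜ) :=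
          card_le_card fun o ho =>
            S.mem_coloursIn_inter hM (mem_filter.1 ho).1 (mem_filter.1 ho).2
      _ ≤ #D * (7 - 2) := card_compl_pair hjl ▸ card_coloursIn_le _ _
  have hO₃ : #{o ∈ O | ¬ #(cells M o) = 2} ≤ 4 := by
    refine (card_le_sum_excess fun o ho => ?_).trans (hM.sum_excess_le_four hC _)
    have := hM.two_le_card_cells (by omega) (by omega) o
    have := (mem_filter.1 ho).2
    omega
  have := card_filter_add_card_filter_not (s := O) fun o => #(cells M o) = 2
  have h10 : 10 ≤ #O := S.ten_le_card_offColumns hM hC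
  have h6 : #S.rows + #D = 6 := S.card_rows_add_card_inter
  omega

theorem six_le_card_escaping_add (S : ThreeSharedColours M j l) (hM : MemM M)
    (hC : Fintype.card C = 19) (hjl : j ≠ l) {w : Fin 6} (hw : w ∉ S.rows) :
    6 ≤ #(escaping M S.rows (offColumns M j l)) + 4 * (#(cells M (M w j)) - 2) := by
  have hR : ∀ r ∈ S.rows, ∀ x, M r x ≠ M w j := by
    intro r hr x hx
    by_cases hxj : x = j
    · subst hxj
      exact hw (hM.2.1 x hx ▸ hr)
    by_cases hxl : x = l
    · subst hxl
      exact S.notMem_colColours_of_notMem_rows hM hC hjl hw (mem_colColours.2 ⟨r, hx⟩)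
    have := S.mem_offColumns_of_mem_rows hM hC hjl hr (x := x) (by simp [hxj, hxl])
    rw [hx, mem_offColumns] at this
    exact this.1 (mem_colColours.2 ⟨w, rfl⟩)
  have := hM.card_le_card_escaping_add (O := offColumns M j l)
    (fun o ho => (mem_offColumns.1 ho).1) hR
  have := S.ten_le_card_offColumns hM hC
  have := Nat.mul_le_mul_left (#(cells M (M w j)) - 1) (S.card_rows_le_four hM hC hjl)
  have := hM.two_le_card_cells (by omega) (by omega) (M w j)
  omega

def outerColours (S : ThreeSharedColours M j l) : Finset C :=
  S.rowsᶜ.image (M · j) ∪ S.rowsᶜ.image (M · l)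

theorem four_le_card_outerColours (S : ThreeSharedColours M j l) (hM : MemM M)
    (hC : Fintype.card C = 19) (hjl : j ≠ l) : 4 ≤ #S.outerColours := by
  have hdisj : Disjoint (S.rowsᶜ.image (M · j)) (S.rowsᶜ.image (M · l)) := by
    refine disjoint_left.2 fun d hj hl => ?_
    obtain ⟨w, hw, rfl⟩ := mem_image.1 hj
    obtain ⟨i, -, hi⟩ := mem_image.1 hl
    exact S.notMem_colColours_of_notMem_rows hM hC hjl (mem_compl.1 hw)
      (mem_colColours.2 ⟨i, hi⟩)
  have := S.card_rows_le_four hM hC hjl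
  rw [outerColours, card_union_of_disjoint hdisj, card_image_of_injective _ (hM.2.1 j),
    card_image_of_injective _ (hM.2.1 l), card_compl, Fintype.card_fin]
  omega

theorem disjoint_outerColours_escaping (S : ThreeSharedColours M j l) :
    Disjoint S.outerColours (escaping M S.rows (offColumns M j l)) := by
  refine disjoint_left.2 fun d hd hE => ?_
  have := mem_offColumns.1 (mem_filter.1 hE).1
  rcases mem_union.1 hd with h | h <;> obtain ⟨w, -, rfl⟩ := mem_image.1 h
  exacts [this.1 (mem_colColours.2 ⟨w, rfl⟩), this.2 (mem_colColours.2 ⟨w, rfl⟩)]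

theorem six_le_card_escaping_add_of_mem_outerColours (S : ThreeSharedColours M j l)
    (hM : MemM M) (hC : Fintype.card C = 19) (hjl : j ≠ l) {d : C} (hd : d ∈ S.outerColours) :
    6 ≤ #(escaping M S.rows (offColumns M j l)) + 4 * (#(cells M d) - 2) := by
  rcases mem_union.1 hd with h | h <;> obtain ⟨w, hw, rfl⟩ := mem_image.1 h
  · exact S.six_le_card_escaping_add hM hC hjl (mem_compl.1 hw)
  · simpa [rows_swap, offColumns_comm] using
      S.swap.six_le_card_escaping_add hM hC hjl.symm (w := w) (by rwa [rows_swap, ← mem_compl])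

theorem false (S : ThreeSharedColours M j l) (hM : MemM M) (hC : Fintype.card C = 19)
    (hjl : j ≠ l) : False := by
  set E := escaping M S.rows (offColumns M j l)
  set U := S.outerColours
  have hslack : ∑ d ∈ U, (#(cells M d) - 2) + ∑ o ∈ E, (#(cells M o) - 2) ≤ 4 :=
    (sum_union S.disjoint_outerColours_escaping).symm.trans_le (hM.sum_excess_le_four hC _)
  have hE : #E ≤ ∑ o ∈ E, (#(cells M o) - 2) :=
    card_le_sum_excess fun o ho => S.three_le_card_cells_of_mem_escaping hM ho
  have hU : #U • (6 - #E) ≤ ∑ d ∈ U, 4 * (#(cells M d) - 2) :=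
    card_nsmul_le_sum _ _ _ fun d hd => by
      have : 6 ≤ #E + 4 * (#(cells M d) - 2) :=
        S.six_le_card_escaping_add_of_mem_outerColours hM hC hjl hd
      omega
  rw [← mul_sum, smul_eq_mul] at hU
  have : 4 * (6 - #E) ≤ #U * (6 - #E) :=
    Nat.mul_le_mul_right _ (S.four_le_card_outerColours hM hC hjl)
  omega

end ThreeSharedColours

end SixBySeven

theorem shared_cols_le_two {C : Type*} [Fintype C] (M : Fin 6 → Fin 7 → C)
    (hM : MemM M) (hC : Fintype.card C = 19) (j l : Fin 7) (h : j ≠ l) :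
    Nat.card {c : C // freq M c = 2 ∧ (∃ i, M i j = c) ∧ (∃ i, M i l = c)} ≤ 2 := by
  classical
  by_contra! hlt
  obtain ⟨e⟩ := Function.Embedding.nonempty_of_card_le (α := Fin 3)
    (β := {c : C // freq M c = 2 ∧ (∃ i, M i j = c) ∧ (∃ i, M i l = c)})
    (by rw [Fintype.card_fin, ← Nat.card_eq_fintype_card]; omega)
  choose top htop using fun k => (e k).2.2.1
  choose bot hbot using fun k => (e k).2.2.2
  exact ThreeSharedColours.false
    { top := top, bot := bot
      colour k := (e k).1
      injective_colour := Subtype.val_injective.comp e.injective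
      cells_colour k := cells_eq_pair h (by rw [← freq_eq_card_cells]; exact (e k).2.1)
        (htop k) (hbot k) } hM hC h
end

section
/- If M ∈ 𝓜(6,7,C) with |C| = 19, then for any two distinct rows i, k ∈ [1,6], the number of colours of frequency 2 appearing in both row i and row k is at most 2. -/
open Finset

lemma eq_or_eq_of_freq_eq_two_s18 {C : Type*} {M : Fin 6 → Fin 7 → C} {γ : C} (hγ : freq M γ = 2)
    {p q x : Fin 6 × Fin 7} (hpq : p ≠ q) (hp : M p.1 p.2 = γ) (hq : M q.1 q.2 = γ)
    (hx : M x.1 x.2 = γ) : x = p ∨ x = q := by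
  classical
  by_contra! h
  have hsub : ({x, p, q} : Finset _) ⊆ univ.filter fun y : Fin 6 × Fin 7 => M y.1 y.2 = γ := by
    simp [insert_subset_iff, hx, hp, hq]
  have := card_le_card hsub
  rw [card_insert_of_notMem (by simp [h.1, h.2]), card_pair hpq, ← Fintype.card_subtype,
    ← Nat.card_eq_fintype_card] at this
  rw [freq] at hγ
  omega

namespace SharedRows

structure Counterexample (C : Type*) [Fintype C] where
  M : Fin 6 → Fin 7 → C
  memM : MemM M
  card_eq : Fintype.card C = 19
  i : Fin 6
  k : Fin 6
  i_ne_k : i ≠ k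
  c : Fin 3 → C
  a : Fin 3 → Fin 7
  b : Fin 3 → Fin 7
  c_injective : Function.Injective c
  M_i_a : ∀ t, M i (a t) = c t
  M_k_b : ∀ t, M k (b t) = c t
  eq_of_M_eq_c : ∀ t r j, M r j = c t → (r = i ∧ j = a t) ∨ (r = k ∧ j = b t)

namespace Counterexample

variable {C : Type*} [Fintype C] (X : Counterexample C)

def colourAt (p : Fin 6 × Fin 7) : C := X.M p.1 p.2

def outerRows : Finset (Fin 6) := {X.i, X.k}

def otherRows : Finset (Fin 6) := X.outerRowsᶜ

def pairCols : Finset (Fin 7) := univ.image X.a ∪ univ.image X.b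

def freeCols : Finset (Fin 7) := X.pairColsᶜ

def colPairCells (t : Fin 3) : Finset (Fin 6 × Fin 7) := X.otherRows ×ˢ {X.a t, X.b t}

def pairCells : Finset (Fin 6 × Fin 7) := X.otherRows ×ˢ X.pairCols

def freeCells : Finset (Fin 6 × Fin 7) := X.otherRows ×ˢ X.freeCols

lemma row_injective (r : Fin 6) : Function.Injective (X.M r) := X.memM.1 r

lemma col_injective (j : Fin 7) : Function.Injective fun r => X.M r j := X.memM.2.1 j

lemma a_injective : Function.Injective X.a := fun s t h =>
  X.c_injective (by rw [← X.M_i_a, ← X.M_i_a, h])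

lemma b_injective : Function.Injective X.b := fun s t h =>
  X.c_injective (by rw [← X.M_k_b, ← X.M_k_b, h])

lemma a_ne_b (t : Fin 3) : X.a t ≠ X.b t := fun h =>
  X.i_ne_k (X.col_injective (X.a t)
    (show X.M X.i (X.a t) = X.M X.k (X.a t) by rw [X.M_i_a, h, X.M_k_b]))

lemma mem_outerRows {r : Fin 6} : r ∈ X.outerRows ↔ r = X.i ∨ r = X.k := by
  simp [outerRows]

lemma mem_otherRows {r : Fin 6} : r ∈ X.otherRows ↔ r ∉ X.outerRows := mem_compl

lemma card_otherRows : #X.otherRows = 4 := by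
  rw [otherRows, card_compl, outerRows, card_pair X.i_ne_k]
  rfl

lemma mem_pairCols {j : Fin 7} : j ∈ X.pairCols ↔ ∃ t, X.a t = j ∨ X.b t = j := by
  simp [pairCols, exists_or]

lemma card_colPairCells (t : Fin 3) : #(X.colPairCells t) = 8 := by
  rw [colPairCells, card_product, X.card_otherRows, card_pair (X.a_ne_b t)]

lemma not_forall_a_or_b_eq (j : Fin 7) : ¬ ∀ t, X.a t = j ∨ X.b t = j := by
  intro h
  obtain ⟨s, t, hst, hsame⟩ :=
    Fintype.exists_ne_map_eq_of_card_lt (fun t => X.a t = j) (by simp)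
  rcases h s with hs | hs
  · exact hst (X.a_injective (hs.trans ((hsame ▸ hs : X.a t = j)).symm))
  · have hat : X.a t ≠ j := fun ht => hst (X.a_injective ((hsame ▸ ht : X.a s = j).trans ht.symm))
    exact hst (X.b_injective (hs.trans ((h t).resolve_left hat).symm))

lemma colPairCells_subset (t : Fin 3) : X.colPairCells t ⊆ X.pairCells := by
  refine product_subset_product_right fun j hj => X.mem_pairCols.mpr ⟨t, ?_⟩
  rcases mem_insert.mp hj with rfl | hj
  · exact .inl rfl
  · exact .inr (mem_singleton.mp hj).symm

lemma card_pairCells : #X.pairCells = 4 * #X.pairCols := by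
  rw [pairCells, card_product, X.card_otherRows]

lemma card_freeCols : #X.freeCols = 7 - #X.pairCols := by
  rw [freeCols, card_compl, Fintype.card_fin]

lemma card_freeCells : #X.freeCells = 4 * (7 - #X.pairCols) := by
  rw [freeCells, card_product, X.card_otherRows, X.card_freeCols]

lemma M_ne_c_of_mem_freeCols {u : Fin 7} (hu : u ∈ X.freeCols) (r : Fin 6) (t : Fin 3) :
    X.M r u ≠ X.c t := fun h =>
  mem_compl.mp hu <| X.mem_pairCols.mpr
    ⟨t, (X.eq_of_M_eq_c t r u h).imp (fun h => h.2.symm) fun h => h.2.symm⟩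

variable [DecidableEq C]

def outerColours : Finset C := univ.image (X.M X.i) ∪ univ.image (X.M X.k)

def fresh : Finset C := X.outerColoursᶜ

def stray : Finset C := X.outerColours \ univ.image X.c

lemma mem_outerColours {x : C} :
    x ∈ X.outerColours ↔ ∃ r ∈ X.outerRows, ∃ j, X.M r j = x := by
  simp [outerColours, outerRows]

lemma M_mem_outerColours {r : Fin 6} (hr : r ∈ X.outerRows) (j : Fin 7) :
    X.M r j ∈ X.outerColours :=
  X.mem_outerColours.mpr ⟨r, hr, j, rfl⟩

lemma image_c_subset_inter : univ.image X.c ⊆ univ.image (X.M X.i) ∩ univ.image (X.M X.k) := by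
  intro x hx
  obtain ⟨t, -, rfl⟩ := mem_image.mp hx
  simp only [mem_inter, mem_image, mem_univ, true_and]
  exact ⟨⟨X.a t, X.M_i_a t⟩, ⟨X.b t, X.M_k_b t⟩⟩

lemma card_outerColours_le : #X.outerColours ≤ 11 := by
  have h := card_union_add_card_inter (univ.image (X.M X.i)) (univ.image (X.M X.k))
  have hc := card_le_card X.image_c_subset_inter
  simp only [card_image_of_injective _ (X.row_injective _), card_image_of_injective _ X.c_injective,
    card_univ, Fintype.card_fin] at h hc
  rw [outerColours]
  omega

lemma mem_otherRows_of_mem_fresh {d : C} (hd : d ∈ X.fresh) {r : Fin 6} {j : Fin 7}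
    (h : X.M r j = d) : r ∈ X.otherRows :=
  X.mem_otherRows.mpr fun hr => mem_compl.mp hd (h ▸ X.M_mem_outerColours hr j)

lemma fresh_subset_image_colPairCells (t : Fin 3) :
    X.fresh ⊆ (X.colPairCells t).image X.colourAt := by
  intro d hd
  have hne : X.c t ≠ d := by
    rintro rfl
    exact mem_compl.mp hd (X.M_i_a t ▸ X.M_mem_outerColours (X.mem_outerRows.mpr (.inl rfl)) _)
  rcases X.memM.2.2 _ _ hne with ⟨r, j₁, j₂, h₁, h₂⟩ | ⟨r₁, r₂, j, h₁, h₂⟩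
  · refine absurd (X.mem_otherRows_of_mem_fresh hd h₂) (X.mem_otherRows.not.mpr ?_)
    rcases X.eq_of_M_eq_c t r j₁ h₁ with ⟨rfl, -⟩ | ⟨rfl, -⟩ <;> simp [outerRows]
  · refine mem_image.mpr ⟨(r₂, j), ?_, h₂⟩
    simp only [colPairCells, mem_product, mem_insert, mem_singleton]
    refine ⟨X.mem_otherRows_of_mem_fresh hd h₂, ?_⟩
    rcases X.eq_of_M_eq_c t r₁ j h₁ with ⟨-, rfl⟩ | ⟨-, rfl⟩ <;> simp

lemma card_fresh : #X.fresh = 8 := by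
  have hge : 8 ≤ #X.fresh := by
    have := X.card_outerColours_le
    rw [fresh, card_compl, X.card_eq]
    omega
  have hle := (card_le_card (X.fresh_subset_image_colPairCells 0)).trans card_image_le
  rw [X.card_colPairCells] at hle
  omega

lemma card_outerColours : #X.outerColours = 11 := by
  have := X.card_fresh
  rw [fresh, card_compl, X.card_eq] at this
  have := X.card_outerColours_le
  omega

lemma image_colPairCells (t : Fin 3) : (X.colPairCells t).image X.colourAt = X.fresh :=
  (eq_of_subset_of_card_le (X.fresh_subset_image_colPairCells t)
    (by rw [X.card_fresh, ← X.card_colPairCells t]; exact card_image_le)).symm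

lemma colourAt_mem_fresh {p : Fin 6 × Fin 7} (hp : p ∈ X.pairCells) : X.colourAt p ∈ X.fresh := by
  obtain ⟨hr, hj⟩ := mem_product.mp hp
  obtain ⟨t, ht⟩ := X.mem_pairCols.mp hj
  rw [← X.image_colPairCells t]
  refine mem_image_of_mem _ (mem_product.mpr ⟨hr, ?_⟩)
  rcases ht with h | h <;> simp [h]

lemma image_M_i_inter_image_M_k : univ.image (X.M X.i) ∩ univ.image (X.M X.k) = univ.image X.c := by
  have h := card_union_add_card_inter (univ.image (X.M X.i)) (univ.image (X.M X.k))
  have h11 := X.card_outerColours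
  simp only [card_image_of_injective _ (X.row_injective _), card_univ, Fintype.card_fin] at h
  rw [outerColours] at h11
  refine (eq_of_subset_of_card_le X.image_c_subset_inter ?_).symm
  rw [card_image_of_injective _ X.c_injective, card_univ, Fintype.card_fin]
  omega

lemma two_le_card_fresh_fibre {d : C} (hd : d ∈ X.fresh) :
    2 ≤ #{p ∈ X.pairCells | X.colourAt p = d} := by
  choose q hq hqd using fun t => mem_image.mp (X.fresh_subset_image_colPairCells t hd)
  obtain ⟨t, ht⟩ : ∃ t, q t ≠ q 0 := by
    by_contra! hall
    refine X.not_forall_a_or_b_eq (q 0).2 fun t => ?_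
    have := (mem_product.mp (hq t)).2
    rw [hall t, mem_insert, mem_singleton] at this
    exact this.imp Eq.symm Eq.symm
  calc 2 = #{q t, q 0} := (card_pair ht).symm
    _ ≤ _ := card_le_card <| insert_subset_iff.mpr
      ⟨mem_filter.mpr ⟨X.colPairCells_subset t (hq t), hqd t⟩,
        singleton_subset_iff.mpr (mem_filter.mpr ⟨X.colPairCells_subset 0 (hq 0), hqd 0⟩)⟩

lemma card_pairCells_eq_sum : #X.pairCells = ∑ d ∈ X.fresh, #{p ∈ X.pairCells | X.colourAt p = d} :=
  card_eq_sum_card_fiberwise fun _ hp => X.colourAt_mem_fresh hp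

lemma four_le_card_pairCols : 4 ≤ #X.pairCols := by
  have h := card_nsmul_le_sum _ _ 2 fun d hd => X.two_le_card_fresh_fibre hd
  rw [← X.card_pairCells_eq_sum, X.card_pairCells, X.card_fresh, smul_eq_mul] at h
  omega

lemma mem_image_c_of_M_eq_M {r r' : Fin 6} (hr : r ∈ X.outerRows) (hr' : r' ∈ X.outerRows)
    (hrr' : r ≠ r') {j j' : Fin 7} (h : X.M r j = X.M r' j') : X.M r j ∈ univ.image X.c := by
  rw [← X.image_M_i_inter_image_M_k, mem_inter]
  rcases X.mem_outerRows.mp hr with rfl | rfl <;> rcases X.mem_outerRows.mp hr' with rfl | rfl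
  · exact absurd rfl hrr'
  · exact ⟨mem_image_of_mem _ (mem_univ j), h ▸ mem_image_of_mem _ (mem_univ j')⟩
  · exact ⟨h ▸ mem_image_of_mem _ (mem_univ j'), mem_image_of_mem _ (mem_univ j)⟩
  · exact absurd rfl hrr'

lemma card_stray : #X.stray = 8 := by
  have hc : univ.image X.c ⊆ X.outerColours :=
    X.image_c_subset_inter.trans (inter_subset_left.trans subset_union_left)
  rw [stray, card_sdiff_of_subset hc, X.card_outerColours,
    card_image_of_injective _ X.c_injective, card_univ, Fintype.card_fin]

/-- In the other outer row it would be one of the `c t`, and pair cells are fresh. -/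
lemma eq_or_mem_freeCells_of_mem_stray {x : C} (hx : x ∈ X.stray) {r₀ : Fin 6}
    (hr₀ : r₀ ∈ X.outerRows) {j₀ : Fin 7} (h₀ : X.M r₀ j₀ = x) {r : Fin 6} {j : Fin 7}
    (h : X.M r j = x) : (r = r₀ ∧ j = j₀) ∨ (r, j) ∈ X.freeCells := by
  obtain ⟨hxo, hxc⟩ := mem_sdiff.mp hx
  by_cases hr : r ∈ X.otherRows
  · refine .inr (mem_product.mpr ⟨hr, mem_compl.mpr fun hj => ?_⟩)
    exact mem_compl.mp (X.colourAt_mem_fresh (mem_product.mpr ⟨hr, hj⟩))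
      (show X.M r j ∈ _ from h ▸ hxo)
  · refine .inl ?_
    by_cases hrr : r = r₀
    · subst hrr
      exact ⟨rfl, X.row_injective r (h.trans h₀.symm)⟩
    · exact absurd (h ▸ X.mem_image_c_of_M_eq_M (not_not.mp (X.mem_otherRows.not.mp hr)) hr₀
        hrr (h.trans h₀.symm)) hxc

lemma exists_mem_freeCells_of_mem_stray {x : C} (hx : x ∈ X.stray) :
    ∃ p ∈ X.freeCells, X.colourAt p = x := by
  obtain ⟨r₀, hr₀, j₀, h₀⟩ := X.mem_outerColours.mp (mem_sdiff.mp hx).1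
  by_contra! hnone
  have hcells : ∀ r j, X.M r j = x → r = r₀ ∧ j = j₀ := fun r j h =>
    (X.eq_or_mem_freeCells_of_mem_stray hx hr₀ h₀ h).resolve_right fun hf => hnone _ hf h
  have hsub : X.fresh ⊆ X.otherRows.image (X.M · j₀) := by
    intro d hd
    have hne : x ≠ d := fun h => mem_compl.mp hd (h ▸ (mem_sdiff.mp hx).1)
    rcases X.memM.2.2 _ _ hne with ⟨r, j₁, j₂, h₁, h₂⟩ | ⟨r₁, r₂, j, h₁, h₂⟩
    · obtain ⟨rfl, -⟩ := hcells r j₁ h₁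
      exact absurd hr₀ (X.mem_otherRows.mp (X.mem_otherRows_of_mem_fresh hd h₂))
    · obtain ⟨-, rfl⟩ := hcells r₁ j h₁
      exact mem_image.mpr ⟨r₂, X.mem_otherRows_of_mem_fresh hd h₂, h₂⟩
  have := (card_le_card hsub).trans card_image_le
  rw [X.card_fresh, X.card_otherRows] at this
  omega

def freeFibre (y : C) : Finset (Fin 6 × Fin 7) := {p ∈ X.freeCells | X.colourAt p = y}

def freshFreeCells : Finset (Fin 6 × Fin 7) := {p ∈ X.freeCells | X.colourAt p ∈ X.fresh}

lemma sum_card_freeFibre_add_card_freshFreeCells_le :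
    ∑ x ∈ X.stray, #(X.freeFibre x) + #X.freshFreeCells ≤ #X.freeCells := by
  simp only [freeFibre, freshFreeCells, sum_card_fiberwise_eq_card_filter]
  have hsplit := card_filter_add_card_filter_not (s := X.freeCells) (X.colourAt · ∈ X.fresh)
  have hstray : #{p ∈ X.freeCells | X.colourAt p ∈ X.stray} ≤
      #{p ∈ X.freeCells | X.colourAt p ∉ X.fresh} :=
    card_le_card (monotone_filter_right _ fun _ _ hx hf => mem_compl.mp hf (mem_sdiff.mp hx).1)
  omega

lemma one_le_card_freeFibre {x : C} (hx : x ∈ X.stray) : 1 ≤ #(X.freeFibre x) := by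
  obtain ⟨p, hp, hpx⟩ := X.exists_mem_freeCells_of_mem_stray hx
  exact card_pos.mpr ⟨p, mem_filter.mpr ⟨hp, hpx⟩⟩

lemma eight_le_sum_card_freeFibre : 8 ≤ ∑ x ∈ X.stray, #(X.freeFibre x) := by
  simpa [X.card_stray] using card_nsmul_le_sum _ _ 1 fun x hx => X.one_le_card_freeFibre hx

lemma card_pairCols_le_five : #X.pairCols ≤ 5 := by
  have h := X.eight_le_sum_card_freeFibre.trans
    ((Nat.le_add_right _ _).trans X.sum_card_freeFibre_add_card_freshFreeCells_le)
  rw [X.card_freeCells] at h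
  omega

lemma card_freeFibre_eq_one (hle : ∑ x ∈ X.stray, #(X.freeFibre x) ≤ 8) {x : C}
    (hx : x ∈ X.stray) : #(X.freeFibre x) = 1 := by
  refine ((sum_eq_sum_iff_of_le fun y hy => X.one_le_card_freeFibre hy).mp ?_ x hx).symm
  have := X.eight_le_sum_card_freeFibre
  simp only [sum_const, X.card_stray, smul_eq_mul, mul_one]
  omega

lemma M_mem_stray {r : Fin 6} (hr : r ∈ X.outerRows) {u : Fin 7} (hu : u ∈ X.freeCols) :
    X.M r u ∈ X.stray := by
  refine mem_sdiff.mpr ⟨X.M_mem_outerColours hr u, fun h => ?_⟩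
  obtain ⟨t, -, ht⟩ := mem_image.mp h
  exact X.M_ne_c_of_mem_freeCols hu r t ht.symm

def freshFreeCellsNear (p : Fin 6 × Fin 7) (u : Fin 7) : Finset (Fin 6 × Fin 7) :=
  {q ∈ X.freshFreeCells | q.1 = p.1 ∨ q.2 = u ∨ q.2 = p.2}

lemma fresh_subset_of_freeFibre_eq {r₀ : Fin 6} (hr₀ : r₀ ∈ X.outerRows) {u : Fin 7}
    (hu : u ∈ X.freeCols) {p : Fin 6 × Fin 7} (hp : X.freeFibre (X.M r₀ u) = {p}) :
    X.fresh ⊆ X.pairCols.image (X.M p.1) ∪ (X.freshFreeCellsNear p u).image X.colourAt := by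
  have hpf : p ∈ X.freeCells := (mem_filter.mp (hp ▸ mem_singleton_self p)).1
  have hcells : ∀ r j, X.M r j = X.M r₀ u → (r = r₀ ∧ j = u) ∨ (r, j) = p := fun r j h =>
    (X.eq_or_mem_freeCells_of_mem_stray (X.M_mem_stray hr₀ hu) hr₀ rfl h).imp_right fun hf =>
      mem_singleton.mp (hp ▸ mem_filter.mpr ⟨hf, h⟩)
  intro d hd
  have hne : X.M r₀ u ≠ d := fun h => mem_compl.mp hd (h ▸ X.M_mem_outerColours hr₀ u)
  have hnear : ∀ r j, r ∈ X.otherRows → j ∈ X.freeCols → X.M r j = d →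
      (r = p.1 ∨ j = u ∨ j = p.2) → d ∈ (X.freshFreeCellsNear p u).image X.colourAt :=
    fun r j hr hj h hrj => mem_image.mpr ⟨(r, j), mem_filter.mpr
      ⟨mem_filter.mpr ⟨mem_product.mpr ⟨hr, hj⟩, show X.M r j ∈ _ from h ▸ hd⟩, hrj⟩, h⟩
  rcases X.memM.2.2 _ _ hne with ⟨r, j₁, j₂, h₁, h₂⟩ | ⟨r₁, r₂, j, h₁, h₂⟩
  · have hr := X.mem_otherRows_of_mem_fresh hd h₂
    obtain ⟨rfl, -⟩ | rfl := hcells r j₁ h₁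
    · exact absurd hr₀ (X.mem_otherRows.mp hr)
    · by_cases hj₂ : j₂ ∈ X.pairCols
      · exact mem_union_left _ (mem_image.mpr ⟨j₂, hj₂, h₂⟩)
      · exact mem_union_right _ (hnear r j₂ hr (mem_compl.mpr hj₂) h₂ (.inl rfl))
  · refine mem_union_right _ (hnear r₂ j (X.mem_otherRows_of_mem_fresh hd h₂) ?_ h₂ ?_)
    · obtain ⟨-, rfl⟩ | rfl := hcells r₁ j h₁
      exacts [hu, (mem_product.mp hpf).2]
    · obtain ⟨-, rfl⟩ | rfl := hcells r₁ j h₁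
      exacts [.inr (.inl rfl), .inr (.inr rfl)]

lemma eight_le_of_freeFibre_eq {r₀ : Fin 6} (hr₀ : r₀ ∈ X.outerRows) {u : Fin 7}
    (hu : u ∈ X.freeCols) {p : Fin 6 × Fin 7} (hp : X.freeFibre (X.M r₀ u) = {p}) :
    8 ≤ #X.pairCols + #X.freshFreeCells := by
  have h := (card_le_card (X.fresh_subset_of_freeFibre_eq hr₀ hu hp)).trans (card_union_le _ _)
  have h₁ : #(X.pairCols.image (X.M p.1)) ≤ #X.pairCols := card_image_le
  have h₂ : #((X.freshFreeCellsNear p u).image X.colourAt) ≤ #X.freshFreeCells :=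
    card_image_le.trans (card_filter_le _ _)
  rw [X.card_fresh] at h
  omega

lemma freeFibre_eq_singleton {x : C} (h : #(X.freeFibre x) = 1) {p : Fin 6 × Fin 7}
    (hp : p ∈ X.freeFibre x) : X.freeFibre x = {p} :=
  eq_singleton_iff_unique_mem.mpr ⟨hp, fun q hq => card_le_one.mp h.le q hq p hp⟩

lemma card_pairCols_ne_five : #X.pairCols ≠ 5 := by
  intro h5
  have hsum := X.sum_card_freeFibre_add_card_freshFreeCells_le
  have h8 := X.eight_le_sum_card_freeFibre
  rw [X.card_freeCells, h5] at hsum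
  obtain ⟨u, hu⟩ : X.freeCols.Nonempty := card_pos.mp (by rw [X.card_freeCols, h5]; decide)
  have hi : X.i ∈ X.outerRows := X.mem_outerRows.mpr (.inl rfl)
  have h1 := X.card_freeFibre_eq_one (by omega) (X.M_mem_stray hi hu)
  obtain ⟨p, hp⟩ := card_eq_one.mp h1
  have := X.eight_le_of_freeFibre_eq hi hu hp
  omega

def outsiders : Finset C := (X.outerRows ×ˢ X.freeCols).image X.colourAt

lemma outsiders_subset_stray : X.outsiders ⊆ X.stray := by
  intro x hx
  obtain ⟨p, hp, rfl⟩ := mem_image.mp hx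
  exact X.M_mem_stray (mem_product.mp hp).1 (mem_product.mp hp).2

lemma card_outsiders : #X.outsiders = 2 * #X.freeCols := by
  rw [outsiders, card_image_of_injOn, card_product, outerRows, card_pair X.i_ne_k]
  rintro ⟨r, u⟩ hp ⟨r', u'⟩ hq h
  obtain ⟨hr, hu⟩ := mem_product.mp hp
  obtain ⟨hr', -⟩ := mem_product.mp hq
  by_cases hrr : r = r'
  · subst hrr
    exact Prod.ext rfl (X.row_injective r h)
  · obtain ⟨t, -, ht⟩ := mem_image.mp (X.mem_image_c_of_M_eq_M hr hr' hrr h)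
    exact absurd ht.symm (X.M_ne_c_of_mem_freeCols hu r t)

/-- Otherwise the six outsiders would need two free cells each and the other two stray colours
one each: `14 > 12` free cells. -/
lemma exists_outsider_card_freeFibre_eq_one (h4 : #X.pairCols = 4) :
    ∃ x ∈ X.outsiders, #(X.freeFibre x) = 1 := by
  by_contra! h
  have hO := card_nsmul_le_sum X.outsiders (fun x => #(X.freeFibre x)) 2 fun x hx =>
    (X.one_le_card_freeFibre (X.outsiders_subset_stray hx)).lt_of_ne (h x hx).symm
  have hR := card_nsmul_le_sum (X.stray \ X.outsiders) (fun x => #(X.freeFibre x)) 1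
    fun x hx => X.one_le_card_freeFibre (mem_sdiff.mp hx).1
  have hsplit := sum_sdiff X.outsiders_subset_stray (f := fun x => #(X.freeFibre x))
  have hsum := X.sum_card_freeFibre_add_card_freshFreeCells_le
  rw [card_sdiff_of_subset X.outsiders_subset_stray, X.card_stray, X.card_outsiders,
    X.card_freeCols, h4, smul_eq_mul] at hR
  rw [X.card_outsiders, X.card_freeCols, h4, smul_eq_mul] at hO
  rw [X.card_freeCells, h4] at hsum
  omega

lemma card_freshFreeCells_eq_four (h4 : #X.pairCols = 4) :
    #X.freshFreeCells = 4 ∧ ∀ x ∈ X.stray, #(X.freeFibre x) = 1 := by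
  obtain ⟨x, hx, h1⟩ := X.exists_outsider_card_freeFibre_eq_one h4
  obtain ⟨⟨r₀, u⟩, hru, rfl⟩ := mem_image.mp hx
  obtain ⟨p, hp⟩ := card_eq_one.mp h1
  have h8 := X.eight_le_of_freeFibre_eq (mem_product.mp hru).1 (mem_product.mp hru).2 hp
  have hsum := X.sum_card_freeFibre_add_card_freshFreeCells_le
  have hge := X.eight_le_sum_card_freeFibre
  rw [X.card_freeCells, h4] at hsum
  exact ⟨by omega, fun y hy => X.card_freeFibre_eq_one (by omega) hy⟩

lemma card_fresh_fibre_eq_two (h4 : #X.pairCols = 4) {d : C} (hd : d ∈ X.fresh) :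
    #{p ∈ X.pairCells | X.colourAt p = d} = 2 := by
  refine ((sum_eq_sum_iff_of_le fun e he => X.two_le_card_fresh_fibre he).mp ?_ d hd).symm
  rw [← X.card_pairCells_eq_sum, X.card_pairCells, h4, sum_const, X.card_fresh, smul_eq_mul]

lemma freshFreeCellsNear_eq (h4 : #X.pairCols = 4) (hN : #X.freshFreeCells = 4) {r₀ : Fin 6}
    (hr₀ : r₀ ∈ X.outerRows) {u : Fin 7} (hu : u ∈ X.freeCols) {p : Fin 6 × Fin 7}
    (hp : X.freeFibre (X.M r₀ u) = {p}) : X.freshFreeCellsNear p u = X.freshFreeCells := by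
  have h := (card_le_card (X.fresh_subset_of_freeFibre_eq hr₀ hu hp)).trans (card_union_le _ _)
  have h₁ : #(X.pairCols.image (X.M p.1)) ≤ 4 := card_image_le.trans h4.le
  have h₂ := card_image_le (s := X.freshFreeCellsNear p u) (f := X.colourAt)
  rw [X.card_fresh] at h
  exact eq_of_subset_of_card_le (filter_subset _ _) (by omega)

def outsiderCells : Finset (Fin 6 × Fin 7) := {p ∈ X.freeCells | X.colourAt p ∈ X.outsiders}

lemma card_outsiderCells (h4 : #X.pairCols = 4) (huniq : ∀ x ∈ X.stray, #(X.freeFibre x) = 1) :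
    #X.outsiderCells = 6 := by
  rw [outsiderCells, ← sum_card_fiberwise_eq_card_filter]
  change ∑ x ∈ X.outsiders, #(X.freeFibre x) = 6
  rw [sum_congr rfl fun x hx => huniq x (X.outsiders_subset_stray hx)]
  simp [X.card_outsiders, X.card_freeCols, h4]

lemma exists_freeFibre_eq_of_mem_outsiderCells (huniq : ∀ x ∈ X.stray, #(X.freeFibre x) = 1)
    {p : Fin 6 × Fin 7} (hp : p ∈ X.outsiderCells) :
    ∃ r₀ ∈ X.outerRows, ∃ u ∈ X.freeCols, X.freeFibre (X.M r₀ u) = {p} := by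
  obtain ⟨hpf, hpo⟩ := mem_filter.mp hp
  obtain ⟨⟨r₀, u⟩, hru, hpx⟩ := mem_image.mp hpo
  refine ⟨r₀, (mem_product.mp hru).1, u, (mem_product.mp hru).2, ?_⟩
  exact X.freeFibre_eq_singleton (x := X.M r₀ u)
    (huniq _ (X.outsiders_subset_stray (mem_image_of_mem _ hru)))
    (mem_filter.mpr ⟨hpf, hpx.symm⟩)

/-- A fresh colour with no free cell lies in the pair columns of every row of an outsider cell
(`fresh_subset_of_freeFibre_eq`), and it has only two cells there. -/
lemma card_rows_outsiderCells_le_two (h4 : #X.pairCols = 4) (hN : #X.freshFreeCells = 4)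
    (huniq : ∀ x ∈ X.stray, #(X.freeFibre x) = 1) : #(X.outsiderCells.image Prod.fst) ≤ 2 := by
  obtain ⟨d, hd, hdK⟩ := exists_mem_notMem_of_card_lt_card
    (s := X.freshFreeCells.image X.colourAt) (t := X.fresh)
    (by rw [X.card_fresh]; exact card_image_le.trans_lt (by omega))
  rw [← X.card_fresh_fibre_eq_two h4 hd]
  refine (card_le_card fun ρ hρ => ?_).trans (card_image_le (f := Prod.fst))
  obtain ⟨p, hp, rfl⟩ := mem_image.mp hρ
  obtain ⟨r₀, hr₀, u, hu, hfib⟩ := X.exists_freeFibre_eq_of_mem_outsiderCells huniq hp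
  rcases mem_union.mp (X.fresh_subset_of_freeFibre_eq hr₀ hu hfib hd) with h | h
  · obtain ⟨j, hj, hjd⟩ := mem_image.mp h
    refine mem_image.mpr ⟨(p.1, j), mem_filter.mpr ⟨mem_product.mpr ⟨?_, hj⟩, hjd⟩, rfl⟩
    exact (mem_product.mp (mem_filter.mp hp).1).1
  · exact absurd (image_subset_image (filter_subset _ _) h) hdK

lemma outsiderCells_eq_product (h4 : #X.pairCols = 4) (hN : #X.freshFreeCells = 4)
    (huniq : ∀ x ∈ X.stray, #(X.freeFibre x) = 1) :
    X.outsiderCells = X.outsiderCells.image Prod.fst ×ˢ X.freeCols := by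
  refine eq_of_subset_of_card_le (fun p hp => mem_product.mpr
    ⟨mem_image_of_mem _ hp, (mem_product.mp (mem_filter.mp hp).1).2⟩) ?_
  rw [card_product, X.card_outsiderCells h4 huniq, X.card_freeCols, h4]
  have := X.card_rows_outsiderCells_le_two h4 hN huniq
  omega

lemma fst_mem_of_mem_freshFreeCells (h4 : #X.pairCols = 4) (hN : #X.freshFreeCells = 4)
    (huniq : ∀ x ∈ X.stray, #(X.freeFibre x) = 1) {q : Fin 6 × Fin 7}
    (hq : q ∈ X.freshFreeCells) : q.1 ∈ X.otherRows \ X.outsiderCells.image Prod.fst := by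
  obtain ⟨hqf, hqd⟩ := mem_filter.mp hq
  refine mem_sdiff.mpr ⟨(mem_product.mp hqf).1, fun hrow => ?_⟩
  have hqo : q ∈ X.outsiderCells := by
    rw [X.outsiderCells_eq_product h4 hN huniq]
    exact mem_product.mpr ⟨hrow, (mem_product.mp hqf).2⟩
  exact mem_compl.mp hqd (mem_sdiff.mp (X.outsiders_subset_stray (mem_filter.mp hqo).2)).1

lemma two_le_card_image_snd_freshFreeCells (h4 : #X.pairCols = 4) (hN : #X.freshFreeCells = 4)
    (huniq : ∀ x ∈ X.stray, #(X.freeFibre x) = 1) : 2 ≤ #(X.freshFreeCells.image Prod.snd) := by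
  have hsub : X.freshFreeCells ⊆
      (X.otherRows \ X.outsiderCells.image Prod.fst) ×ˢ X.freshFreeCells.image Prod.snd :=
    fun q hq => mem_product.mpr
      ⟨X.fst_mem_of_mem_freshFreeCells h4 hN huniq hq, mem_image_of_mem _ hq⟩
  have hrows : X.outsiderCells.image Prod.fst ⊆ X.otherRows := fun r hr => by
    obtain ⟨p, hp, rfl⟩ := mem_image.mp hr
    exact (mem_product.mp (mem_filter.mp hp).1).1
  have hcard := congrArg card (X.outsiderCells_eq_product h4 hN huniq)
  have h := card_le_card hsub
  rw [card_product, X.card_outsiderCells h4 huniq, X.card_freeCols, h4] at hcard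
  rw [card_product, card_sdiff_of_subset hrows, X.card_otherRows, hN,
    show #(X.outsiderCells.image Prod.fst) = 2 by omega] at h
  omega

lemma image_snd_freshFreeCells_subset (h4 : #X.pairCols = 4) (hN : #X.freshFreeCells = 4)
    (huniq : ∀ x ∈ X.stray, #(X.freeFibre x) = 1) {u : Fin 7} (hu : u ∈ X.freeCols) :
    ∃ v, X.freshFreeCells.image Prod.snd ⊆ {u, v} := by
  have hi : X.i ∈ X.outerRows := X.mem_outerRows.mpr (.inl rfl)
  obtain ⟨p, hp⟩ := card_eq_one.mp (huniq _ (X.M_mem_stray hi hu))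
  have hpo : p ∈ X.outsiderCells := by
    obtain ⟨hpf, hpx⟩ := mem_filter.mp (hp ▸ mem_singleton_self p)
    refine mem_filter.mpr ⟨hpf, ?_⟩
    rw [hpx]
    exact mem_image_of_mem X.colourAt (mem_product.mpr ⟨hi, hu⟩ : (X.i, u) ∈ _)
  refine ⟨p.2, fun j hj => ?_⟩
  obtain ⟨q, hq, rfl⟩ := mem_image.mp hj
  rw [← X.freshFreeCellsNear_eq h4 hN hi hu hp] at hq
  obtain ⟨hq, hnear⟩ := mem_filter.mp hq
  rcases hnear with h | h | h
  · exact absurd (h ▸ mem_image_of_mem _ hpo)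
      (mem_sdiff.mp (X.fst_mem_of_mem_freshFreeCells h4 hN huniq hq)).2
  · simp [h]
  · simp [h]

lemma card_pairCols_ne_four : #X.pairCols ≠ 4 := by
  intro h4
  obtain ⟨hN, huniq⟩ := X.card_freshFreeCells_eq_four h4
  have h2 := X.two_le_card_image_snd_freshFreeCells h4 hN huniq
  have hfree : X.freeCols ⊆ X.freshFreeCells.image Prod.snd := fun u hu => by
    obtain ⟨v, hv⟩ := X.image_snd_freshFreeCells_subset h4 hN huniq hu
    rw [eq_of_subset_of_card_le hv ((card_insert_le _ _).trans h2)]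
    exact mem_insert_self u {v}
  obtain ⟨u, hu⟩ : X.freeCols.Nonempty := card_pos.mp (by rw [X.card_freeCols, h4]; decide)
  obtain ⟨v, hv⟩ := X.image_snd_freshFreeCells_subset h4 hN huniq hu
  have := (card_le_card hfree).trans ((card_le_card hv).trans (card_insert_le _ _))
  rw [X.card_freeCols, h4, card_singleton] at this
  omega

theorem isEmpty : IsEmpty (Counterexample C) := by
  refine ⟨fun X => ?_⟩
  have h4 := X.four_le_card_pairCols
  have h5 := X.card_pairCols_le_five
  interval_cases h : #X.pairCols
  · exact X.card_pairCols_ne_four h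
  · exact X.card_pairCols_ne_five h

end Counterexample

end SharedRows

theorem shared_rows_le_two {C : Type*} [Fintype C] (M : Fin 6 → Fin 7 → C)
    (hM : MemM M) (hC : Fintype.card C = 19) (i k : Fin 6) (h : i ≠ k) :
    Nat.card {c : C // freq M c = 2 ∧ (∃ j, M i j = c) ∧ (∃ j, M k j = c)} ≤ 2 := by
  classical
  by_contra! hlt
  obtain ⟨e⟩ : Nonempty (Fin 3 ↪ {c : C // freq M c = 2 ∧ (∃ j, M i j = c) ∧ (∃ j, M k j = c)}) :=
    Function.Embedding.nonempty_of_card_le (by rwa [Fintype.card_fin, ← Nat.card_eq_fintype_card])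
  choose a ha using fun t => (e t).2.2.1
  choose b hb using fun t => (e t).2.2.2
  refine SharedRows.Counterexample.isEmpty.false ⟨M, hM, hC, i, k, h, fun t => e t, a, b,
    Subtype.val_injective.comp e.injective, ha, hb, fun t r j hrj => ?_⟩
  have hne : (i, a t) ≠ (k, b t) := fun h' => h (congrArg Prod.fst h')
  simpa [Prod.ext_iff] using eq_or_eq_of_freq_eq_two_s18 (e t).2.1 hne (ha t) (hb t) (x := (r, j)) hrj
end
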